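/- arXiv:2005.07386 — 2 statements merged into one kernel-verified Lean document; each statement's English description precedes it below -/
import Mathlib

section
/- Let ℏ, n, m be positive integers, let {t_j}_{j∈ℕ} be a periodic sequence of impulse instants, let P ∈ ℝ^{n×n}, Q₁, …, Q_ℏ ∈ ℝ^{n×m}, and let λ₁ > 0 be a real number. Assume: (a) there exists k∗ ∈ ℕ⁺ such that the rank condition at level k∗ holds; (b) every ρ ∈ σ(P) satisfies Re(ρ) ≤ λ₁. Then for every η ∈ ℝⁿ there exist k ∈ ℕ⁺ and vectors ξ₁, …, ξ_k ∈ ℝ^m with ‖ξ_j‖ ≤ 1 for each j such that η = Σ_{j=1}^{k} e^{(λ₁ I_n − P) t_j} Q_{ν(j)} ξ_j. In other words, the set F = ∪_{k∈ℕ⁺} { Σ_{j=1}^{k} e^{(λ₁ I_n − P) t_j} Q_{ν(j)} ξ_j : ξ_j ∈ ℝ^m, ‖ξ_j‖ ≤ 1 } equals all of ℝⁿ. -/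
open Matrix Finset

/-- `mexp t M = e^{M t}`, the matrix exponential. -/
noncomputable def mexp {n : ℕ} (t : ℝ) (M : Matrix (Fin n) (Fin n) ℝ) : Matrix (Fin n) (Fin n) ℝ :=
  NormedSpace.exp (t • M)

/-- Action of a rectangular matrix on Euclidean space (so that `‖·‖` is the Euclidean norm). -/
noncomputable def act {n m : ℕ} (M : Matrix (Fin n) (Fin m) ℝ)
    (v : EuclideanSpace ℝ (Fin m)) : EuclideanSpace ℝ (Fin n) :=
  Matrix.toEuclideanLin M v

/-- `nu h j` is the unique index in `{1,…,h}` congruent to `j` modulo `h`. -/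
def nu (h j : ℕ) : ℕ := if j % h = 0 then h else j % h

open Filter Topology

/-!
Write `M_j = e^{(λI - P) t_j} Q_{ν(j)}`. If the Gramian `G_k = ∑_{j=1}^k M_j M_jᵀ` satisfies
`G_k ≥ ‖η‖² I`, then solving `G_k y = η` and putting `ξ_j = M_jᵀ y` gives
`∑_j ‖ξ_j‖² = ⟪η, y⟫ ≤ 1`, so `η` is reachable in `k` steps.

The rank condition makes `G_{k*}` positive definite, say `G_{k*} ≥ c I`. Periodicity of the
instants gives `M_{j + pL} = A^p M_j` for `L = k* ℏ`, `A = e^{(λI - P)s}`, `s = k* t_ℏ > 0`, hence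
`⟪G_{NL} u, u⟫ ≥ c ∑_{p<N} ‖(Aᵀ)^p u‖²`. The vectors `u` with `(Aᵀ)^p u → 0` form a subspace
invariant under the generator `(λI - P)ᵀ`; an eigenvector in it, with eigenvalue `λ - ρ` for some
`ρ ∈ σ(P)`, is multiplied by `e^{(λ - ρ)s}`, of modulus `≥ 1`, so the subspace is zero. Hence the
series diverges for `u ≠ 0`, uniformly on the compact unit sphere, and `G_k ≥ ‖η‖² I` for large `k`.
-/

section GramianSolve

variable {ι E F : Type*} [NormedAddCommGroup E] [InnerProductSpace ℝ E] [FiniteDimensional ℝ E]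
  [NormedAddCommGroup F] [InnerProductSpace ℝ F] [FiniteDimensional ℝ F]

theorem exists_sum_eq_of_sum_norm_adjoint_sq_ge (T : ι → F →ₗ[ℝ] E) (s : Finset ι) {c : ℝ}
    (hc : 0 < c) (hT : ∀ u, c * ‖u‖ ^ 2 ≤ ∑ i ∈ s, ‖(T i).adjoint u‖ ^ 2) {η : E}
    (hη : ‖η‖ ^ 2 ≤ c) :
    ∃ ξ : ι → F, (∀ i ∈ s, ‖ξ i‖ ≤ 1) ∧ η = ∑ i ∈ s, T i (ξ i) := by
  set G : E →ₗ[ℝ] E := ∑ i ∈ s, T i ∘ₗ (T i).adjoint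
  have hG : ∀ u, inner ℝ (G u) u = ∑ i ∈ s, ‖(T i).adjoint u‖ ^ 2 := fun u => by
    simp only [G, LinearMap.sum_apply, LinearMap.comp_apply, sum_inner]
    exact sum_congr rfl fun i _ => by
      rw [← LinearMap.adjoint_inner_right, real_inner_self_eq_norm_sq]
  have hGinj : Function.Injective G := by
    refine (injective_iff_map_eq_zero G).mpr fun u hu => ?_
    have := hT u
    rw [← hG, hu, inner_zero_left] at this
    simpa using nonpos_of_mul_nonpos_right this hc
  obtain ⟨y, rfl⟩ := LinearMap.injective_iff_surjective.mp hGinj η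
  refine ⟨fun i => (T i).adjoint y, fun i hi => ?_, by simp [G, LinearMap.sum_apply]⟩
  have hle : ‖(T i).adjoint y‖ ^ 2 ≤ inner ℝ (G y) y :=
    hG y ▸ single_le_sum (fun j _ => sq_nonneg ‖(T j).adjoint y‖) hi
  have hcs : inner ℝ (G y) y ≤ ‖G y‖ * ‖y‖ := real_inner_le_norm _ _
  have hX : (‖G y‖ * ‖y‖) ^ 2 ≤ ‖G y‖ * ‖y‖ :=
    calc (‖G y‖ * ‖y‖) ^ 2 = ‖G y‖ ^ 2 * ‖y‖ ^ 2 := by ring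
      _ ≤ c * ‖y‖ ^ 2 := by gcongr
      _ ≤ inner ℝ (G y) y := hG y ▸ hT y
      _ ≤ ‖G y‖ * ‖y‖ := hcs
  have hX1 : ‖G y‖ * ‖y‖ ≤ 1 := by nlinarith [mul_nonneg (norm_nonneg (G y)) (norm_nonneg y)]
  exact (pow_le_one_iff_of_nonneg (norm_nonneg _) two_ne_zero).mp (by linarith)

end GramianSolve

theorem IsCompact.exists_forall_le_of_tendsto_atTop {X : Type*} [TopologicalSpace X] {K : Set X}
    (hK : IsCompact K) {f : ℕ → X → ℝ} (hcont : ∀ k, Continuous (f k)) (hmono : Monotone f)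
    (hf : ∀ x ∈ K, Tendsto (f · x) atTop atTop) (R : ℝ) : ∃ k, ∀ x ∈ K, R ≤ f k x := by
  obtain ⟨k, hk⟩ := hK.elim_directed_cover (fun k => {x | R < f k x})
    (fun k => isOpen_lt continuous_const (hcont k))
    (fun x hx => Set.mem_iUnion.mpr ((hf x hx).eventually_gt_atTop R).exists)
    (Monotone.directed_le fun _ _ hkl _ hx => hx.trans_le (hmono hkl _))
  exact ⟨k, fun x hx => (hk hx).le⟩

theorem mul_norm_sq_le_of_forall_norm_eq_one {E : Type*} [NormedAddCommGroup E] [NormedSpace ℝ E]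
    {f : E → ℝ} (hf : ∀ (a : ℝ) u, f (a • u) = a ^ 2 * f u) {c : ℝ}
    (h : ∀ u, ‖u‖ = 1 → c ≤ f u) (u : E) : c * ‖u‖ ^ 2 ≤ f u := by
  rcases eq_or_ne u 0 with rfl | hu
  · simpa using (hf 0 0).symm.le
  have hpos : 0 < ‖u‖ := norm_pos_iff.mpr hu
  have := h (‖u‖⁻¹ • u) (by simp [norm_smul, hpos.ne'])
  calc c * ‖u‖ ^ 2 ≤ f (‖u‖⁻¹ • u) * ‖u‖ ^ 2 := by gcongr
    _ = f u := by rw [hf]; field_simp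

theorem Matrix.exists_mulVec_eq_smul_of_mapsTo {ι : Type*} [Fintype ι] (D : Matrix ι ι ℂ)
    {W : Submodule ℂ (ι → ℂ)} (hW : W ≠ ⊥) (hD : ∀ v ∈ W, D *ᵥ v ∈ W) :
    ∃ ρ : ℂ, ∃ w ∈ W, w ≠ 0 ∧ D *ᵥ w = ρ • w := by
  have : Nontrivial W := Submodule.nontrivial_iff_ne_bot.mpr hW
  obtain ⟨ρ, hρ⟩ := Module.End.exists_eigenvalue (D.mulVecLin.restrict hD)
  obtain ⟨w, hw⟩ := hρ.exists_hasEigenvector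
  exact ⟨ρ, w, w.2, fun h => hw.2 (Subtype.ext h), congrArg Subtype.val hw.apply_eq_smul⟩

section MatrixSpectrum

variable {ι : Type*} [Fintype ι] [DecidableEq ι]

theorem Matrix.mem_spectrum_of_mulVec_eq_smul {K : Type*} [Field K] {A : Matrix ι ι K} {μ : K}
    {v : ι → K} (hv : v ≠ 0) (h : A *ᵥ v = μ • v) : μ ∈ spectrum K A := by
  rw [← Matrix.spectrum_toLin', ← Module.End.hasEigenvalue_iff_mem_spectrum]
  exact Module.End.hasEigenvalue_of_hasEigenvector
    ⟨Module.End.mem_eigenspace_iff.mpr (by rwa [Matrix.toLin'_apply]), hv⟩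

theorem Matrix.pow_mulVec_eq_smul {R : Type*} [CommSemiring R] {A : Matrix ι ι R} {μ : R}
    {v : ι → R} (h : A *ᵥ v = μ • v) (p : ℕ) : A ^ p *ᵥ v = μ ^ p • v := by
  induction p with
  | zero => simp
  | succ p ih => rw [pow_succ', ← mulVec_mulVec, ih, mulVec_smul, h, smul_smul, pow_succ]

theorem Matrix.exp_map_ofReal_mulVec (D : Matrix ι ι ℝ) {v : ι → ℂ} {ρ : ℂ}
    (hv : D.map Complex.ofReal *ᵥ v = ρ • v) :
    (NormedSpace.exp D).map Complex.ofReal *ᵥ v = Complex.exp ρ • v := by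
  let _ : NormedRing (Matrix ι ι ℝ) := Matrix.linftyOpNormedRing
  let _ : NormedAlgebra ℝ (Matrix ι ι ℝ) := Matrix.linftyOpNormedAlgebra
  let Φ : Matrix ι ι ℝ →+ (ι → ℂ) :=
    (Matrix.mulVec.addMonoidHomLeft v).comp Complex.ofRealHom.mapMatrix.toAddMonoidHom
  have hΦ : Continuous Φ :=
    (continuous_id.matrix_map Complex.continuous_ofReal).matrix_mulVec continuous_const
  have hD := (NormedSpace.exp_series_hasSum_exp' (𝕂 := ℝ) D).map Φ hΦ
  have hρ := (NormedSpace.exp_series_hasSum_exp' (𝕂 := ℂ) ρ).smul_const v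
  rw [← Complex.exp_eq_exp_ℂ] at hρ
  refine hD.unique (hρ.congr_fun fun k => ?_)
  have hk : ((k.factorial : ℝ)⁻¹ • D ^ k).map Complex.ofReal
      = ((k.factorial : ℝ)⁻¹ : ℂ) • (D.map Complex.ofReal) ^ k := by
    rw [Matrix.map_smul' _ _ _ fun _ _ => Complex.ofReal_mul _ _, Complex.ofReal_inv]
    exact congrArg _ (map_pow Complex.ofRealHom.mapMatrix D k)
  change ((k.factorial : ℝ)⁻¹ • D ^ k).map Complex.ofReal *ᵥ v = _
  rw [hk, smul_mulVec, pow_mulVec_eq_smul hv, smul_smul]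
  push_cast
  rfl

variable {𝕜 : Type*} [Field 𝕜] [TopologicalSpace 𝕜] [IsTopologicalRing 𝕜]

def Matrix.stableSubmodule (A : Matrix ι ι 𝕜) : Submodule 𝕜 (ι → 𝕜) where
  carrier := {v | Tendsto (fun p : ℕ => A ^ p *ᵥ v) atTop (𝓝 0)}
  add_mem' ha hb := by simpa [mulVec_add] using ha.add hb
  zero_mem' := by simpa using tendsto_const_nhds
  smul_mem' c _ hv := by simpa [mulVec_smul] using hv.const_smul c

theorem Matrix.mulVec_mem_stableSubmodule {A B : Matrix ι ι 𝕜} (hAB : Commute A B) {v : ι → 𝕜}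
    (hv : v ∈ A.stableSubmodule) : B *ᵥ v ∈ A.stableSubmodule := by
  have hB : Continuous (B *ᵥ ·) := continuous_const.matrix_mulVec continuous_id
  have := (hB.tendsto 0).comp hv
  simp only [mulVec_zero] at this
  refine this.congr fun p => ?_
  simp only [Function.comp_apply, mulVec_mulVec, (hAB.pow_left p).eq]

theorem Matrix.exists_re_neg_mem_spectrum_of_tendsto_exp_pow_mulVec (D : Matrix ι ι ℝ) {u : ι → ℝ}
    (hu : u ≠ 0) (h : Tendsto (fun p : ℕ => NormedSpace.exp D ^ p *ᵥ u) atTop (𝓝 0)) :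
    ∃ ρ ∈ spectrum ℂ (D.map Complex.ofReal), ρ.re < 0 := by
  set A : Matrix ι ι ℂ := (NormedSpace.exp D).map Complex.ofReal
  have huA : Complex.ofReal ∘ u ∈ A.stableSubmodule := by
    have hmap : ∀ p : ℕ, A ^ p *ᵥ (Complex.ofReal ∘ u)
        = Complex.ofReal ∘ (NormedSpace.exp D ^ p *ᵥ u) := fun p => by
      ext i
      rw [show A ^ p = (NormedSpace.exp D ^ p).map Complex.ofReal from
        (map_pow Complex.ofRealHom.mapMatrix _ p).symm]
      exact (RingHom.map_mulVec Complex.ofRealHom _ u i).symm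
    refine (tendsto_pi_nhds.mpr fun i => ?_).congr fun p => (hmap p).symm
    simpa [Function.comp_def] using
      (Complex.continuous_ofReal.tendsto 0).comp (tendsto_pi_nhds.mp h i)
  have hne : A.stableSubmodule ≠ ⊥ :=
    (Submodule.ne_bot_iff _).mpr ⟨_, huA, fun h0 => hu (funext fun i => by
      simpa using congrFun h0 i)⟩
  have hcomm : Commute A (D.map Complex.ofReal) :=
    ((Commute.refl D).exp_right.map Complex.ofRealHom.mapMatrix).symm
  -- `D` commutes with `exp D`, so the stable subspace of `exp D` contains an eigenvector of `D`
  obtain ⟨ρ, w, hwA, hw0, hDw⟩ := (D.map Complex.ofReal).exists_mulVec_eq_smul_of_mapsTo hne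
    fun v hv => mulVec_mem_stableSubmodule hcomm hv
  refine ⟨ρ, mem_spectrum_of_mulVec_eq_smul hw0 hDw, ?_⟩
  have hdecay : Tendsto (fun p : ℕ => Complex.exp ρ ^ p • w) atTop (𝓝 0) := by
    have hwA' : Tendsto (fun p : ℕ => A ^ p *ᵥ w) atTop (𝓝 0) := hwA
    exact hwA'.congr (pow_mulVec_eq_smul (D.exp_map_ofReal_mulVec hDw))
  have hnorm : Tendsto (fun p : ℕ => ‖Complex.exp ρ‖ ^ p) atTop (𝓝 0) := by
    have := hdecay.norm.div_const ‖w‖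
    simpa [norm_smul, norm_ne_zero_iff.mpr hw0] using this
  rw [tendsto_pow_atTop_nhds_zero_iff, abs_norm, Complex.norm_exp] at hnorm
  exact Real.exp_lt_one_iff.mp hnorm

theorem Matrix.spectrum_transpose {R : Type*} [CommRing R]
    (A : Matrix ι ι R) : spectrum R Aᵀ = spectrum R A := by
  ext r
  rw [spectrum.mem_iff, spectrum.mem_iff, ← isUnit_transpose, transpose_sub,
    transpose_transpose, Algebra.algebraMap_eq_smul_one, transpose_smul, transpose_one]

theorem Matrix.re_nonneg_of_mem_spectrum_map_smul_sub (P : Matrix ι ι ℝ) {lam : ℝ}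
    (hP : ∀ ρ ∈ spectrum ℂ (P.map Complex.ofReal), ρ.re ≤ lam) {s : ℝ} (hs : 0 < s) {ρ : ℂ}
    (hρ : ρ ∈ spectrum ℂ ((s • (lam • (1 : Matrix ι ι ℝ) - P)ᵀ).map Complex.ofReal)) :
    0 ≤ ρ.re := by
  have hmap : (s • (lam • (1 : Matrix ι ι ℝ) - P)ᵀ).map Complex.ofReal
      = Units.mk0 (s : ℂ) (Complex.ofReal_ne_zero.mpr hs.ne') •
        (algebraMap ℂ (Matrix ι ι ℂ) lam - (P.map Complex.ofReal)ᵀ) := by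
    ext i j
    by_cases hij : i = j <;> simp [Matrix.algebraMap_matrix_apply, hij]
  rw [hmap, spectrum.unit_smul_eq_smul, ← spectrum.singleton_sub_eq, spectrum_transpose] at hρ
  obtain ⟨_, ⟨_, rfl, ρ₀, hρ₀, rfl⟩, rfl⟩ := hρ
  simp only [Units.val_mk0, smul_eq_mul, Complex.re_ofReal_mul, Complex.sub_re,
    Complex.ofReal_re]
  exact mul_nonneg hs.le (sub_nonneg.mpr (hP ρ₀ hρ₀))

end MatrixSpectrum

section Mexp

variable {n : ℕ}

theorem mexp_add (a b : ℝ) (M : Matrix (Fin n) (Fin n) ℝ) :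
    mexp (a + b) M = mexp a M * mexp b M := by
  rw [mexp, add_smul,
    Matrix.exp_add_of_commute _ _ (((Commute.refl M).smul_left a).smul_right b), mexp, mexp]

theorem mexp_natCast_mul (p : ℕ) (s : ℝ) (M : Matrix (Fin n) (Fin n) ℝ) :
    mexp (p * s) M = mexp s M ^ p := by
  rw [mexp, mexp, ← Matrix.exp_nsmul, mul_smul, Nat.cast_smul_eq_nsmul]

theorem transpose_mexp (s : ℝ) (M : Matrix (Fin n) (Fin n) ℝ) :
    (mexp s M)ᵀ = NormedSpace.exp (s • Mᵀ) := by
  rw [mexp, ← Matrix.exp_transpose, transpose_smul]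

theorem mexp_smul_one_sub (s lam : ℝ) (P : Matrix (Fin n) (Fin n) ℝ) :
    mexp s (lam • 1 - P) = Real.exp (lam * s) • mexp (-s) P := by
  have hsplit : s • (lam • 1 - P) = (lam * s) • (1 : Matrix (Fin n) (Fin n) ℝ) + (-s) • P := by
    rw [smul_sub, smul_smul, neg_smul, sub_eq_add_neg, mul_comm]
  rw [mexp, hsplit,
    Matrix.exp_add_of_commute _ _ (((Commute.one_left P).smul_left _).smul_right _),
    smul_one_eq_diagonal, Matrix.exp_diagonal, Pi.exp_def, ← Real.exp_eq_exp_ℝ,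
    ← smul_one_eq_diagonal, smul_mul, one_mul, mexp]

end Mexp

section Act

variable {n m : ℕ}

theorem ofLp_act (M : Matrix (Fin n) (Fin m) ℝ) (v : EuclideanSpace ℝ (Fin m)) :
    WithLp.ofLp (act M v) = M *ᵥ WithLp.ofLp v :=
  rfl

theorem act_mul {k : ℕ} (X : Matrix (Fin n) (Fin k) ℝ) (Y : Matrix (Fin k) (Fin m) ℝ)
    (v : EuclideanSpace ℝ (Fin m)) : act (X * Y) v = act X (act Y v) := by
  apply WithLp.ofLp_injective
  simp only [ofLp_act, mulVec_mulVec]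

theorem adjoint_toEuclideanLin (M : Matrix (Fin n) (Fin m) ℝ) :
    (toEuclideanLin M).adjoint = toEuclideanLin Mᵀ := by
  rw [← toEuclideanLin_conjTranspose_eq_adjoint, conjTranspose_eq_transpose_of_trivial]

end Act

theorem not_tendsto_act_transpose_mexp_pow {n : ℕ} (P : Matrix (Fin n) (Fin n) ℝ) {lam : ℝ}
    (hP : ∀ ρ ∈ spectrum ℂ (P.map Complex.ofReal), ρ.re ≤ lam) {s : ℝ} (hs : 0 < s)
    {u : EuclideanSpace ℝ (Fin n)} (hu : u ≠ 0) :
    ¬Tendsto (fun p : ℕ => act ((mexp s (lam • 1 - P))ᵀ ^ p) u) atTop (𝓝 0) := by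
  intro h
  have h' : Tendsto (fun p : ℕ => NormedSpace.exp (s • (lam • 1 - P)ᵀ) ^ p *ᵥ WithLp.ofLp u)
      atTop (𝓝 0) := by
    refine (((PiLp.continuous_ofLp 2 _).tendsto 0).comp h).congr fun p => ?_
    rw [Function.comp_apply, ofLp_act, transpose_mexp]
  obtain ⟨ρ, hρ, hre⟩ := exists_re_neg_mem_spectrum_of_tendsto_exp_pow_mulVec _
    (by simpa using hu) h'
  linarith [re_nonneg_of_mem_spectrum_map_smul_sub P hP hs hρ]

section GramForm

variable {n m : ℕ}

/-- The quadratic form `u ↦ ⟪(∑_{j=1}^k M_j M_jᵀ) u, u⟫` of the Gramian of `M_1, …, M_k`. -/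
noncomputable def gramForm (M : ℕ → Matrix (Fin n) (Fin m) ℝ) (k : ℕ)
    (u : EuclideanSpace ℝ (Fin n)) : ℝ :=
  ∑ j ∈ Icc 1 k, ‖act (M j)ᵀ u‖ ^ 2

variable (M : ℕ → Matrix (Fin n) (Fin m) ℝ)

theorem gramForm_smul (k : ℕ) (a : ℝ) (u : EuclideanSpace ℝ (Fin n)) :
    gramForm M k (a • u) = a ^ 2 * gramForm M k u := by
  simp only [gramForm, act, map_smul, norm_smul, mul_pow, Real.norm_eq_abs, sq_abs, mul_sum]

theorem continuous_gramForm (k : ℕ) : Continuous (gramForm M k) :=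
  continuous_finsetSum _ fun j _ =>
    ((toEuclideanLin (M j)ᵀ).continuous_of_finiteDimensional.norm).pow 2

theorem monotone_gramForm : Monotone (gramForm M) := fun _ _ hkl _ =>
  sum_le_sum_of_subset_of_nonneg (Icc_subset_Icc_right hkl) fun _ _ _ => sq_nonneg _

theorem gramForm_pos {k : ℕ} (hM : ∀ v : Fin n → ℝ, (∀ j ∈ Icc 1 k, (M j)ᵀ *ᵥ v = 0) → v = 0)
    {u : EuclideanSpace ℝ (Fin n)} (hu : u ≠ 0) : 0 < gramForm M k u := by
  refine (sum_nonneg fun _ _ => sq_nonneg _).lt_of_ne fun h0 => hu ?_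
  have hzero := (sum_eq_zero_iff_of_nonneg fun _ _ => sq_nonneg _).mp h0.symm
  refine (WithLp.ofLp_eq_zero 2).mp (hM _ fun j hj => ?_)
  have hj0 := norm_eq_zero.mp (pow_eq_zero_iff two_ne_zero |>.mp (hzero j hj))
  simpa [ofLp_act] using congrArg WithLp.ofLp hj0

theorem exists_pos_mul_norm_sq_le_gramForm {k : ℕ}
    (hM : ∀ v : Fin n → ℝ, (∀ j ∈ Icc 1 k, (M j)ᵀ *ᵥ v = 0) → v = 0) :
    ∃ c > 0, ∀ u, c * ‖u‖ ^ 2 ≤ gramForm M k u := by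
  obtain ⟨c, hc, hcle⟩ := (isCompact_sphere (0 : EuclideanSpace ℝ (Fin n)) 1).exists_forall_le'
    (continuous_gramForm M k).continuousOn fun u hu =>
      gramForm_pos M hM (ne_zero_of_mem_unit_sphere ⟨u, hu⟩)
  exact ⟨c, hc, mul_norm_sq_le_of_forall_norm_eq_one (gramForm_smul M k)
    fun u hu => hcle u (by simpa using hu)⟩

theorem sum_gramForm_pow_le {A : Matrix (Fin n) (Fin n) ℝ} {k L : ℕ} (hkL : k ≤ L)
    (hA : ∀ j p, M (j + p * L) = A ^ p * M j) (u : EuclideanSpace ℝ (Fin n)) (N : ℕ) :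
    ∑ p ∈ range N, gramForm M k (act (Aᵀ ^ p) u) ≤ gramForm M (N * L) u := by
  induction N with
  | zero => simp [gramForm]
  | succ N ih =>
    have hshift : gramForm M k (act (Aᵀ ^ N) u) = ∑ j ∈ Icc (1 + N * L) (k + N * L),
        ‖act (M j)ᵀ u‖ ^ 2 := by
      rw [← map_add_right_Icc, sum_map]
      refine sum_congr rfl fun j _ => ?_
      simp only [addRightEmbedding_apply, hA, transpose_mul, transpose_pow, act_mul]
    have hsplit : gramForm M ((N + 1) * L) u = gramForm M (N * L) u
        + ∑ j ∈ Ioc (N * L) (N * L + L), ‖act (M j)ᵀ u‖ ^ 2 := by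
      have hIoc : ∀ x, Icc 1 x = Ioc 0 x := fun x => by ext; simp only [mem_Icc, mem_Ioc]; omega
      simp only [gramForm, hIoc, add_one_mul]
      exact (sum_Ioc_consecutive (fun j => ‖act (M j)ᵀ u‖ ^ 2) (Nat.zero_le _)
        (Nat.le_add_right _ _)).symm
    rw [sum_range_succ, hsplit, hshift]
    gcongr ?_ + ?_
    refine sum_le_sum_of_subset_of_nonneg (fun j hj => ?_) fun _ _ _ => sq_nonneg _
    simp only [mem_Icc, mem_Ioc] at hj ⊢
    omega

theorem tendsto_gramForm_atTop {A : Matrix (Fin n) (Fin n) ℝ} {k L : ℕ} (hkL : k ≤ L)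
    (hA : ∀ j p, M (j + p * L) = A ^ p * M j) {c : ℝ} (hc : 0 < c)
    (hck : ∀ u, c * ‖u‖ ^ 2 ≤ gramForm M k u) {u : EuclideanSpace ℝ (Fin n)}
    (hu : ¬Tendsto (fun p : ℕ => act (Aᵀ ^ p) u) atTop (𝓝 0)) :
    Tendsto (gramForm M · u) atTop atTop := by
  have hsum : Tendsto (fun N => ∑ p ∈ range N, ‖act (Aᵀ ^ p) u‖ ^ 2) atTop atTop := by
    refine (not_summable_iff_tendsto_nat_atTop_of_nonneg fun _ => sq_nonneg _).mp fun hs => hu ?_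
    refine tendsto_zero_iff_norm_tendsto_zero.mpr ?_
    simpa [Real.sqrt_sq (norm_nonneg _)] using hs.tendsto_atTop_zero.sqrt
  refine tendsto_atTop_atTop_of_monotone (fun _ _ h => monotone_gramForm M h u) fun R => ?_
  obtain ⟨N, hN⟩ := (hsum.eventually_ge_atTop (R / c)).exists
  refine ⟨N * L, ?_⟩
  calc R ≤ c * ∑ p ∈ range N, ‖act (Aᵀ ^ p) u‖ ^ 2 := (div_le_iff₀' hc).mp hN
    _ = ∑ p ∈ range N, c * ‖act (Aᵀ ^ p) u‖ ^ 2 := mul_sum _ _ _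
    _ ≤ ∑ p ∈ range N, gramForm M k (act (Aᵀ ^ p) u) := sum_le_sum fun _ _ => hck _
    _ ≤ gramForm M (N * L) u := sum_gramForm_pow_le M hkL hA u N

theorem exists_mul_norm_sq_le_gramForm (hM : ∀ u ≠ 0, Tendsto (gramForm M · u) atTop atTop)
    (R : ℝ) : ∃ K, ∀ u, R * ‖u‖ ^ 2 ≤ gramForm M K u := by
  obtain ⟨K, hK⟩ := (isCompact_sphere (0 : EuclideanSpace ℝ (Fin n)) 1)
    |>.exists_forall_le_of_tendsto_atTop (continuous_gramForm M) (monotone_gramForm M)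
    (fun u hu => hM u (ne_zero_of_mem_unit_sphere ⟨u, hu⟩)) R
  exact ⟨K, mul_norm_sq_le_of_forall_norm_eq_one (gramForm_smul M K)
    fun u hu => hK u (by simpa using hu)⟩

end GramForm

theorem eq_zero_of_forall_transpose_mulVec_eq_zero {n m : ℕ} {N : ℕ → Matrix (Fin n) (Fin m) ℝ}
    {s : Finset ℕ}
    (hspan : Submodule.span ℝ {x : Fin n → ℝ | ∃ j ∈ s, ∃ i : Fin m, x = (N j)ᵀ i} = ⊤)
    {v : Fin n → ℝ} (hv : ∀ j ∈ s, (N j)ᵀ *ᵥ v = 0) : v = 0 := by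
  have horth : ∀ x ∈ Submodule.span ℝ {x : Fin n → ℝ | ∃ j ∈ s, ∃ i : Fin m, x = (N j)ᵀ i},
      x ⬝ᵥ v = 0 := fun x hx => by
    induction hx using Submodule.span_induction with
    | mem x hx =>
      obtain ⟨j, hj, i, rfl⟩ := hx
      exact congrFun (hv j hj) i
    | zero => exact zero_dotProduct v
    | add x y _ _ hx hy => rw [add_dotProduct, hx, hy, add_zero]
    | smul a x _ hx => rw [smul_dotProduct, hx, smul_zero]
  exact dotProduct_self_eq_zero.mp (horth v (hspan ▸ Submodule.mem_top))

theorem apply_add_mul_eq_of_apply_add_eq {t : ℕ → ℝ} {h : ℕ} (ht : ∀ j, t (j + h) = t j + t h)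
    (j q : ℕ) : t (j + q * h) = t j + q * t h := by
  induction q with
  | zero => simp
  | succ q ih => rw [add_one_mul, ← add_assoc, ht, ih]; push_cast; ring

theorem nu_add_mul_self (h j q : ℕ) : nu h (j + q * h) = nu h j := by
  simp only [nu, Nat.add_mul_mod_self_right]

theorem stmt1_general (ℏ n m : ℕ) (hℏ : 0 < ℏ)
    (t : ℕ → ℝ) (ht0 : t 0 = 0) (htmono : StrictMono t)
    (htper : ∀ j : ℕ, t (j + ℏ) = t j + t ℏ)
    (P : Matrix (Fin n) (Fin n) ℝ) (Q : ℕ → Matrix (Fin n) (Fin m) ℝ)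
    (lam : ℝ)
    (hrank : ∃ kstar : ℕ, 0 < kstar ∧
      Submodule.span ℝ {x : Fin n → ℝ |
        ∃ j ∈ Finset.Icc 1 kstar, ∃ i : Fin m, x = (mexp (-(t j)) P * Q (nu ℏ j))ᵀ i} = ⊤)
    (hspec : ∀ ρ ∈ spectrum ℂ (P.map Complex.ofReal), ρ.re ≤ lam) :
    ∀ η : EuclideanSpace ℝ (Fin n), ∃ k : ℕ, 0 < k ∧
      ∃ ξ : ℕ → EuclideanSpace ℝ (Fin m),
        (∀ j ∈ Finset.Icc 1 k, ‖ξ j‖ ≤ 1) ∧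
        η = ∑ j ∈ Finset.Icc 1 k,
          act (mexp (t j) (lam • (1 : Matrix (Fin n) (Fin n) ℝ) - P) * Q (nu ℏ j)) (ξ j) := by
  obtain ⟨kstar, hkstar, hspan⟩ := hrank
  intro η
  set M : ℕ → Matrix (Fin n) (Fin m) ℝ := fun j => mexp (t j) (lam • 1 - P) * Q (nu ℏ j)
  set s : ℝ := kstar * t ℏ
  have hs : 0 < s := mul_pos (Nat.cast_pos.mpr hkstar) (ht0 ▸ htmono hℏ)
  have hM : ∀ j p, M (j + p * (kstar * ℏ)) = mexp s (lam • 1 - P) ^ p * M j := fun j p => by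
    simp only [M, ← mul_assoc, nu_add_mul_self, apply_add_mul_eq_of_apply_add_eq htper,
      ← mexp_natCast_mul, ← Matrix.mul_assoc, ← mexp_add, s]
    push_cast
    ring_nf
  have hker : ∀ v : Fin n → ℝ, (∀ j ∈ Icc 1 kstar, (M j)ᵀ *ᵥ v = 0) → v = 0 := fun v hv =>
    eq_zero_of_forall_transpose_mulVec_eq_zero hspan fun j hj => by
      have hj : (mexp (t j) (lam • 1 - P) * Q (nu ℏ j))ᵀ *ᵥ v = 0 := hv j hj
      rw [mexp_smul_one_sub, smul_mul, transpose_smul, smul_mulVec] at hj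
      exact (smul_eq_zero.mp hj).resolve_left (Real.exp_pos _).ne'
  obtain ⟨c, hc, hcle⟩ := exists_pos_mul_norm_sq_le_gramForm M hker
  obtain ⟨K, hK⟩ := exists_mul_norm_sq_le_gramForm M (fun u hu =>
    tendsto_gramForm_atTop M (Nat.le_mul_of_pos_right kstar hℏ) hM hc hcle
      (not_tendsto_act_transpose_mexp_pow P hspec hs hu)) (‖η‖ ^ 2 + 1)
  obtain ⟨ξ, hξ, hη⟩ := exists_sum_eq_of_sum_norm_adjoint_sq_ge (fun j => toEuclideanLin (M j))
    (Icc 1 (K + 1)) (by positivity) (fun u => by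
      simp only [adjoint_toEuclideanLin]
      exact (hK u).trans (monotone_gramForm M K.le_succ u))
    (le_add_of_nonneg_right zero_le_one)
  exact ⟨K + 1, K.succ_pos, ξ, hξ, hη⟩

/-- the reachable set `F` equals all of `ℝⁿ`. -/
theorem stmt1 (ℏ n m : ℕ) (hℏ : 0 < ℏ) (hn : 0 < n) (hm : 0 < m)
    (t : ℕ → ℝ) (ht0 : t 0 = 0) (htmono : StrictMono t)
    (htper : ∀ j : ℕ, t (j + ℏ) = t j + t ℏ)
    (P : Matrix (Fin n) (Fin n) ℝ) (Q : ℕ → Matrix (Fin n) (Fin m) ℝ)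
    (lam : ℝ) (hlam : 0 < lam)
    (hrank : ∃ kstar : ℕ, 0 < kstar ∧
      Submodule.span ℝ {x : Fin n → ℝ |
        ∃ j ∈ Finset.Icc 1 kstar, ∃ i : Fin m, x = (mexp (-(t j)) P * Q (nu ℏ j))ᵀ i} = ⊤)
    (hspec : ∀ ρ ∈ spectrum ℂ (P.map Complex.ofReal), ρ.re ≤ lam) :
    ∀ η : EuclideanSpace ℝ (Fin n), ∃ k : ℕ, 0 < k ∧
      ∃ ξ : ℕ → EuclideanSpace ℝ (Fin m),
        (∀ j ∈ Finset.Icc 1 k, ‖ξ j‖ ≤ 1) ∧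
        η = ∑ j ∈ Finset.Icc 1 k,
          act (mexp (t j) (lam • (1 : Matrix (Fin n) (Fin n) ℝ) - P) * Q (nu ℏ j)) (ξ j) :=
  stmt1_general ℏ n m hℏ t ht0 htmono htper P Q lam hrank hspec
end

section
/- Let n be a positive integer, P ∈ ℝ^{n×n}, and let λ₁ be a real number such that every ρ ∈ σ(P) satisfies Re(ρ) ≤ λ₁. If φ ∈ ℝⁿ satisfies ‖e^{(λ₁ I_n − P^⊤) t} φ‖ → 0 as t → +∞, then φ = 0. -/
/-!
The vectors `v` with `exp (t A) v → 0` form an `A`-invariant complex subspace. Were it nonzero,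
it would contain an eigenvector `A y = μ y`, and `exp (t A) y = e^{t μ} y` has norm at least
`‖y‖` for `t ≥ 0` as soon as `Re μ ≥ 0`. For `A = λ₁ I - Pᵀ` (complexified) the eigenvalues
are `λ₁ - ρ` with `ρ ∈ σ(P)`, so this applies.
-/

open Matrix Filter

open NormedSpace Topology Pointwise

namespace Matrix

variable {ι : Type*} [Fintype ι] [DecidableEq ι]

theorem spectrum_transpose_s5 {K : Type*} [Field K] (A : Matrix ι ι K) :
    spectrum K Aᵀ = spectrum K A := by
  ext μ
  simp only [mem_spectrum_iff_isRoot_charpoly, charpoly_transpose]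

theorem exp_map_ofReal (M : Matrix ι ι ℝ) :
    exp (M.map Complex.ofReal) = (exp M).map Complex.ofReal := by
  open scoped Norms.Operator in
  exact (map_exp Complex.ofRealHom.mapMatrix
    (continuous_id.matrix_map Complex.continuous_ofReal) M).symm

theorem exp_mulVec_of_mulVec_eq_smul {B : Matrix ι ι ℂ} {y : ι → ℂ} {μ : ℂ}
    (h : B *ᵥ y = μ • y) : exp B *ᵥ y = Complex.exp μ • y := by
  have hpow : ∀ k : ℕ, B ^ k *ᵥ y = μ ^ k • y := by
    intro k
    induction k with
    | zero => simp
    | succ k ih => rw [pow_succ, ← mulVec_mulVec, h, mulVec_smul, ih, smul_smul, pow_succ']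
  open scoped Norms.Operator in
  have hB := (exp_series_hasSum_exp' (𝕂 := ℂ) B).map (mulVec.addMonoidHomLeft y)
    (continuous_id.matrix_mulVec continuous_const)
  have hμ := (exp_series_hasSum_exp' (𝕂 := ℂ) μ).smul_const y
  rw [Complex.exp_eq_exp_ℂ]
  refine hB.unique ?_
  simpa [Function.comp_def, mulVec.addMonoidHomLeft, smul_mulVec, hpow, smul_smul] using hμ

def stableSubmodule_s5 (A : Matrix ι ι ℂ) : Submodule ℂ (ι → ℂ) where
  carrier := {v | Tendsto (fun t : ℝ => exp (t • A) *ᵥ v) atTop (𝓝 0)}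
  zero_mem' := by simp
  add_mem' {v w} hv hw := by simpa [mulVec_add] using hv.add hw
  smul_mem' c v hv := by simpa [mulVec_smul] using hv.const_smul c

theorem mulVec_mem_stableSubmodule_s5 {A : Matrix ι ι ℂ} {v : ι → ℂ}
    (hv : v ∈ stableSubmodule_s5 A) : A *ᵥ v ∈ stableSubmodule_s5 A := by
  have hcomm (t : ℝ) : exp (t • A) *ᵥ (A *ᵥ v) = A *ᵥ (exp (t • A) *ᵥ v) := by
    rw [mulVec_mulVec, mulVec_mulVec, ((Commute.refl A).smul_left t).exp_left.eq]
  have hA : Continuous (A *ᵥ · : (ι → ℂ) → ι → ℂ) :=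
    continuous_const.matrix_mulVec continuous_id
  change Tendsto _ _ _
  simpa [hcomm, Function.comp_def] using (hA.tendsto 0).comp hv

theorem exists_mulVec_eq_smul_mem_stableSubmodule {A : Matrix ι ι ℂ}
    (h : stableSubmodule_s5 A ≠ ⊥) :
    ∃ μ ∈ spectrum ℂ A, ∃ y ∈ stableSubmodule_s5 A, y ≠ 0 ∧ A *ᵥ y = μ • y := by
  have : Nontrivial (stableSubmodule_s5 A) := Submodule.nontrivial_iff_ne_bot.mpr h
  obtain ⟨μ, hμ⟩ :=
    Module.End.exists_eigenvalue ((toLin' A).restrict fun _ => mulVec_mem_stableSubmodule_s5)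
  obtain ⟨⟨y, hyS⟩, hy⟩ := hμ.exists_hasEigenvector
  have hy0 : y ≠ 0 := fun h => hy.2 (Subtype.ext h)
  have hAy : A *ᵥ y = μ • y := congrArg Subtype.val hy.apply_eq_smul
  have hspec : Module.End.HasEigenvalue (toLin' A) μ :=
    Module.End.hasEigenvalue_of_hasEigenvector
      ⟨Module.End.mem_eigenspace_iff.mpr (by rwa [toLin'_apply]), hy0⟩
  exact ⟨μ, by simpa using hspec.mem_spectrum, y, hyS, hy0, hAy⟩

theorem eq_zero_of_tendsto_exp_smul_mulVec {A : Matrix ι ι ℂ}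
    (hA : ∀ μ ∈ spectrum ℂ A, 0 ≤ μ.re) {x : ι → ℂ}
    (hx : Tendsto (fun t : ℝ => exp (t • A) *ᵥ x) atTop (𝓝 0)) : x = 0 := by
  by_contra hx0
  obtain ⟨μ, hμ, y, hyS, hy0, hy⟩ := exists_mulVec_eq_smul_mem_stableSubmodule
    (Submodule.ne_bot_iff _ |>.mpr ⟨x, hx, hx0⟩)
  have hexp (t : ℝ) : exp (t • A) *ᵥ y = Complex.exp (t * μ) • y :=
    exp_mulVec_of_mulVec_eq_smul (by rw [smul_mulVec, hy, ← smul_assoc, Complex.real_smul])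
  have hgrow : ∀ᶠ t : ℝ in atTop, ‖y‖ ≤ ‖exp (t • A) *ᵥ y‖ := by
    filter_upwards [eventually_ge_atTop 0] with t ht
    rw [hexp, norm_smul, Complex.norm_exp, Complex.re_ofReal_mul]
    exact le_mul_of_one_le_left (norm_nonneg y) (Real.one_le_exp (mul_nonneg ht (hA μ hμ)))
  have := ge_of_tendsto hyS.norm hgrow
  exact hy0 (norm_le_zero_iff.mp (by simpa using this))

theorem tendsto_exp_smul_map_ofReal_mulVec {M : Matrix ι ι ℝ} {v : ι → ℝ}
    (h : Tendsto (fun t : ℝ => exp (t • M) *ᵥ v) atTop (𝓝 0)) :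
    Tendsto (fun t : ℝ => exp (t • M.map Complex.ofReal) *ᵥ (Complex.ofReal ∘ v))
      atTop (𝓝 0) := by
  have hmap (t : ℝ) :
      exp (t • M.map Complex.ofReal) *ᵥ (Complex.ofReal ∘ v) =
        Complex.ofReal ∘ (exp (t • M) *ᵥ v) := by
    have : t • M.map Complex.ofReal = (t • M).map Complex.ofReal := by
      ext; simp [Complex.real_smul]
    rw [this, exp_map_ofReal]
    funext i
    exact (RingHom.map_mulVec Complex.ofRealHom _ v i).symm
  have hcont : Continuous fun w : ι → ℝ => Complex.ofReal ∘ w :=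
    continuous_pi fun i => Complex.continuous_ofReal.comp (continuous_apply i)
  convert (hcont.tendsto 0).comp h using 2
  · exact hmap _
  · simp [Function.comp_def, Pi.zero_def]

theorem spectrum_map_ofReal_smul_one_sub_transpose (P : Matrix ι ι ℝ) (lam : ℝ) :
    spectrum ℂ ((lam • 1 - Pᵀ).map Complex.ofReal) =
      ({(lam : ℂ)} : Set ℂ) - spectrum ℂ (P.map Complex.ofReal) := by
  rw [← spectrum_transpose_s5 (P.map _), spectrum.singleton_sub_eq]
  congr 1
  ext i j
  simp [algebraMap_eq_diagonal, diagonal_apply, one_apply, apply_ite]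

end Matrix

theorem stmt5_general (n : ℕ) (P : Matrix (Fin n) (Fin n) ℝ) (lam : ℝ)
    (hspec : ∀ ρ ∈ spectrum ℂ (P.map Complex.ofReal), ρ.re ≤ lam)
    (φ : EuclideanSpace ℝ (Fin n))
    (hφ : Tendsto (fun t : ℝ =>
        ‖act (mexp t (lam • (1 : Matrix (Fin n) (Fin n) ℝ) - Pᵀ)) φ‖) atTop (nhds 0)) :
    φ = 0 := by
  set M := lam • (1 : Matrix (Fin n) (Fin n) ℝ) - Pᵀ
  have hreal : Tendsto (fun t : ℝ => exp (t • M) *ᵥ φ.ofLp) atTop (𝓝 0) := by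
    simpa [Function.comp_def, act, mexp] using
      ((PiLp.continuous_ofLp 2 _).tendsto 0).comp (tendsto_zero_iff_norm_tendsto_zero.mpr hφ)
  have hM : ∀ μ ∈ spectrum ℂ (M.map Complex.ofReal), 0 ≤ μ.re := by
    rw [spectrum_map_ofReal_smul_one_sub_transpose]
    rintro _ ⟨_, rfl, ρ, hρ, rfl⟩
    simpa using hspec ρ hρ
  have hzero := eq_zero_of_tendsto_exp_smul_mulVec hM (tendsto_exp_smul_map_ofReal_mulVec hreal)
  ext i
  simpa using congrFun hzero i

/-- if `‖e^{(λ₁ Iₙ − P^⊤) t} φ‖ → 0` as `t → +∞`, then `φ = 0`. -/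
theorem stmt5 (n : ℕ) (hn : 0 < n) (P : Matrix (Fin n) (Fin n) ℝ) (lam : ℝ)
    (hspec : ∀ ρ ∈ spectrum ℂ (P.map Complex.ofReal), ρ.re ≤ lam)
    (φ : EuclideanSpace ℝ (Fin n))
    (hφ : Tendsto (fun t : ℝ =>
        ‖act (mexp t (lam • (1 : Matrix (Fin n) (Fin n) ℝ) - Pᵀ)) φ‖) atTop (nhds 0)) :
    φ = 0 :=
  stmt5_general n P lam hspec φ hφ
end
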